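/- arXiv:math/0008136 — 6 statements merged into one kernel-verified Lean document; each statement's English description precedes it below -/
import Mathlib

section
/- Let X be a countable set with a group Γ acting by permutations, inducing unitary operators U_γ on ℓ²(X) by (U_γ f)(x) = f(γ⁻¹x). Let H₀ be a bounded operator on ℓ²(X) commuting with all U_γ, let 𝓜 ⊆ ℂ be a closed bounded set, and let V be a (Γ,𝓜) pseudo-ergodic multiplication potential (i.e. V(x) ∈ 𝓜 for all x, and for every ε > 0, every finite F ⊆ X, and every W : F → 𝓜 there exists γ ∈ Γ with |W(x) − V(γx)| < ε for all x ∈ F). Then for H = H₀ + V and K = H₀ + W where W : X → 𝓜 is an arbitrary potential with values in 𝓜, one has Spec(K) ⊆ Spec(H). -/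
noncomputable section

open scoped ENNReal ComplexConjugate

/-- `ℓ²(X)` with complex scalars. -/
abbrev L2 (X : Type*) := lp (fun _ : X => ℂ) 2

namespace PEaux

variable {X : Type*}

lemma two_toReal : (2 : ℝ≥0∞).toReal = 2 := by norm_num

lemma norm_le_of_pointwise (f g : L2 X) (c : ℝ) (hc : 0 ≤ c)
    (h : ∀ x, ‖g x‖ ≤ c * ‖f x‖) : ‖g‖ ≤ c * ‖f‖ := by
  have hp : 0 < (2 : ℝ≥0∞).toReal := by rw [two_toReal]; norm_num
  refine lp.norm_le_of_tsum_le hp (mul_nonneg hc (norm_nonneg _)) ?_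
  have key : ∀ x : X, ‖g x‖ ^ (2:ℝ≥0∞).toReal ≤ c ^ (2:ℝ≥0∞).toReal * ‖f x‖ ^ (2:ℝ≥0∞).toReal := by
    intro x
    rw [← Real.mul_rpow hc (norm_nonneg _)]
    exact Real.rpow_le_rpow (norm_nonneg _) (h x) hp.le
  calc ∑' x, ‖g x‖ ^ (2:ℝ≥0∞).toReal
      ≤ ∑' x, c ^ (2:ℝ≥0∞).toReal * ‖f x‖ ^ (2:ℝ≥0∞).toReal :=
        Summable.tsum_le_tsum key ((lp.memℓp g).summable hp)
          (((lp.memℓp f).summable hp).mul_left _)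
    _ = c ^ (2:ℝ≥0∞).toReal * ∑' x, ‖f x‖ ^ (2:ℝ≥0∞).toReal := tsum_mul_left
    _ = (c * ‖f‖) ^ (2:ℝ≥0∞).toReal := by
        rw [← lp.norm_rpow_eq_tsum hp f, Real.mul_rpow hc (norm_nonneg _)]

lemma norm_comp_equiv (e : X ≃ X) (f g : L2 X) (h : ∀ x, g x = f (e x)) : ‖g‖ = ‖f‖ := by
  have hp : 0 < (2 : ℝ≥0∞).toReal := by rw [two_toReal]; norm_num
  rw [lp.norm_eq_tsum_rpow hp, lp.norm_eq_tsum_rpow hp]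
  congr 1
  calc ∑' x, ‖g x‖ ^ (2:ℝ≥0∞).toReal
      = ∑' x, ‖f (e x)‖ ^ (2:ℝ≥0∞).toReal := by simp only [h]
    _ = ∑' y, ‖f y‖ ^ (2:ℝ≥0∞).toReal := e.tsum_eq (fun y => ‖f y‖ ^ (2:ℝ≥0∞).toReal)

lemma mem_mul (a : X → ℂ) (c : ℝ) (hc0 : 0 ≤ c) (hc : ∀ x, ‖a x‖ ≤ c) (f : L2 X) :
    Memℓp (fun x => a x * f x) 2 := by
  have hp : 0 < (2 : ℝ≥0∞).toReal := by rw [two_toReal]; norm_num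
  apply memℓp_gen
  refine Summable.of_nonneg_of_le (fun x => Real.rpow_nonneg (norm_nonneg _) _)
    (fun x => ?_) (((lp.memℓp f).summable hp).mul_left (c ^ (2:ℝ≥0∞).toReal))
  rw [← Real.mul_rpow hc0 (norm_nonneg _)]
  refine Real.rpow_le_rpow (norm_nonneg _) ?_ hp.le
  rw [norm_mul]
  exact mul_le_mul_of_nonneg_right (hc x) (norm_nonneg _)

/-- Multiplication by a bounded function, as a continuous linear map. -/
def mulOp (a : X → ℂ) (c : ℝ) (hc0 : 0 ≤ c) (hc : ∀ x, ‖a x‖ ≤ c) : L2 X →L[ℂ] L2 X :=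
  LinearMap.mkContinuous
    { toFun := fun f => (⟨fun x => a x * f x, mem_mul a c hc0 hc f⟩ : L2 X)
      map_add' := fun f g => by
        apply lp.ext
        funext x
        simp only [lp.coeFn_add, Pi.add_apply]
        change a x * (f + g) x = a x * f x + a x * g x
        rw [lp.coeFn_add, Pi.add_apply]; ring
      map_smul' := fun z f => by
        apply lp.ext
        funext x
        simp only [lp.coeFn_smul, Pi.smul_apply, RingHom.id_apply]
        change a x * (z • f) x = z • (a x * f x)
        rw [lp.coeFn_smul, Pi.smul_apply, smul_eq_mul, smul_eq_mul]; ring }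
    c
    (fun f => by
      refine norm_le_of_pointwise f _ c hc0 ?_
      intro x
      change ‖a x * f x‖ ≤ c * ‖f x‖
      rw [norm_mul]
      exact mul_le_mul_of_nonneg_right (hc x) (norm_nonneg _))

@[simp] lemma mulOp_apply (a : X → ℂ) (c : ℝ) (hc0 : 0 ≤ c) (hc : ∀ x, ‖a x‖ ≤ c)
    (f : L2 X) (x : X) : (mulOp a c hc0 hc f) x = a x * f x := rfl

/-- The adjoint of a multiplication operator is multiplication by the conjugate. -/
lemma adjoint_eq_of_mul (Mv Mv' : L2 X →L[ℂ] L2 X) (v : X → ℂ)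
    (hMv : ∀ (f : L2 X) (x : X), (Mv f) x = v x * f x)
    (hMv' : ∀ (f : L2 X) (x : X), (Mv' f) x = conj (v x) * f x) :
    ContinuousLinearMap.adjoint Mv = Mv' := by
  symm
  rw [ContinuousLinearMap.eq_adjoint_iff]
  intro f g
  rw [lp.inner_eq_tsum, lp.inner_eq_tsum]
  refine tsum_congr (fun x => ?_)
  change g x * conj ((Mv' f) x) = (Mv g) x * conj (f x)
  rw [hMv', hMv, map_mul, Complex.conj_conj]
  ring

variable {Γ : Type*} [Group Γ] [MulAction Γ X]

/-- The adjoint of the translation unitary `U γ` is `U γ⁻¹`. -/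
lemma adjoint_U (U : Γ → (L2 X →L[ℂ] L2 X))
    (hU : ∀ γ (f : L2 X) (x : X), (U γ f) x = f (γ⁻¹ • x)) (γ : Γ) :
    ContinuousLinearMap.adjoint (U γ) = U γ⁻¹ := by
  symm
  rw [ContinuousLinearMap.eq_adjoint_iff]
  intro f g
  rw [lp.inner_eq_tsum, lp.inner_eq_tsum]
  rw [← (MulAction.toPerm γ : Equiv.Perm X).tsum_eq
    (fun b => (inner ℂ (f b) ((U γ g) b) : ℂ))]
  refine tsum_congr (fun c => ?_)
  show (inner ℂ ((U γ⁻¹ f) c) (g c) : ℂ) = inner ℂ (f (γ • c)) ((U γ g) (γ • c))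
  rw [hU γ⁻¹ f c, inv_inv, hU γ g, inv_smul_smul]

/-- An operator on `ℓ²` whose adjoint and itself are bounded below is invertible. -/
lemma isUnit_of_bounded_below (T : L2 X →L[ℂ] L2 X) (C C' : ℝ) (hC0 : 0 ≤ C)
    (h1 : ∀ f, ‖f‖ ≤ C * ‖T f‖)
    (h2 : ∀ f, ‖f‖ ≤ C' * ‖ContinuousLinearMap.adjoint T f‖) : IsUnit T := by
  rw [ContinuousLinearMap.isUnit_iff_bijective]
  have hinj : Function.Injective T := by
    intro x y hxy
    have := h1 (x - y)
    rw [map_sub, hxy, sub_self, norm_zero, mul_zero] at this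
    exact sub_eq_zero.mp (norm_le_zero_iff.mp this)
  refine ⟨hinj, ?_⟩
  have hanti : AntilipschitzWith C.toNNReal T := by
    refine T.antilipschitz_of_bound (fun x => ?_)
    rw [Real.coe_toNNReal C hC0]
    exact h1 x
  have hcl : IsClosed (Set.range T) := hanti.isClosed_range T.uniformContinuous
  have hcl' : IsClosed ((LinearMap.range (T : L2 X →ₗ[ℂ] L2 X) : Submodule ℂ (L2 X)) : Set (L2 X)) := by
    rwa [LinearMap.coe_range]
  haveI : CompleteSpace (LinearMap.range (T : L2 X →ₗ[ℂ] L2 X) : Submodule ℂ (L2 X)) := hcl'.completeSpace_coe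
  have hrange : LinearMap.range (T : L2 X →ₗ[ℂ] L2 X) = ⊤ := by
    rw [← Submodule.orthogonal_eq_bot_iff, Submodule.eq_bot_iff]
    intro g hg
    rw [Submodule.mem_orthogonal] at hg
    have hTg : ContinuousLinearMap.adjoint T g = 0 := by
      have h0 : (inner ℂ (ContinuousLinearMap.adjoint T g) (ContinuousLinearMap.adjoint T g) : ℂ)
          = 0 := by
        rw [ContinuousLinearMap.adjoint_inner_left, ← inner_conj_symm,
          hg (T (ContinuousLinearMap.adjoint T g)) (LinearMap.mem_range_self (T : L2 X →ₗ[ℂ] L2 X) _)]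
        simp
      exact inner_self_eq_zero.mp h0
    have := h2 g
    rw [hTg, norm_zero, mul_zero] at this
    exact norm_le_zero_iff.mp this
  exact LinearMap.range_eq_top.mp hrange

/-- The core lower-bound transfer lemma. -/
lemma transfer
    (U : Γ → (L2 X →L[ℂ] L2 X))
    (hU : ∀ γ (f : L2 X) (x : X), (U γ f) x = f (γ⁻¹ • x))
    (B : L2 X →L[ℂ] L2 X) (hB : ∀ γ, B ∘L U γ = U γ ∘L B)
    (v w : X → ℂ)
    (Mv Mw : L2 X →L[ℂ] L2 X)
    (hMv : ∀ (f : L2 X) x, (Mv f) x = v x * f x)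
    (hMw : ∀ (f : L2 X) x, (Mw f) x = w x * f x)
    (hvw : ∀ ε > (0:ℝ), ∀ F : Finset X, ∃ γ : Γ, ∀ x ∈ F, ‖w x - v (γ • x)‖ < ε)
    (C : ℝ) (hC0 : 0 ≤ C) (hC : ∀ f, ‖f‖ ≤ C * ‖(B + Mv) f‖) :
    ∀ f, ‖f‖ ≤ C * ‖(B + Mw) f‖ := by
  classical
  have hUnorm : ∀ γ (f : L2 X), ‖U γ f‖ = ‖f‖ := by
    intro γ f
    exact norm_comp_equiv (MulAction.toPerm γ⁻¹) f (U γ f) (fun x => hU γ f x)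
  have hconj : ∀ (γ : Γ) (f : L2 X), ‖f‖ ≤ C * ‖U γ⁻¹ ((B + Mv) (U γ f))‖ := by
    intro γ f
    rw [hUnorm γ⁻¹, ← hUnorm γ f]
    exact hC (U γ f)
  have hpt : ∀ (γ : Γ) (f : L2 X) (x : X),
      (U γ⁻¹ ((B + Mv) (U γ f))) x = (B f) x + v (γ • x) * f x := by
    intro γ f x
    have h1 : (B + Mv) (U γ f) = B (U γ f) + Mv (U γ f) := rfl
    have h2 : B (U γ f) = U γ (B f) := by
      have := congrArg (fun (T : L2 X →L[ℂ] L2 X) => T f) (hB γ)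
      simpa using this
    rw [h1, map_add, lp.coeFn_add, Pi.add_apply]
    congr 1
    · rw [h2, hU γ⁻¹, inv_inv, hU γ, inv_smul_smul]
    · rw [hU γ⁻¹, inv_inv, hMv, hU γ, inv_smul_smul]
  have hfin : ∀ (F : Finset X) (f : L2 X), (∀ x ∉ F, f x = 0) →
      ‖f‖ ≤ C * ‖(B + Mw) f‖ := by
    intro F f hf
    refine le_of_forall_pos_le_add ?_
    intro δ hδ
    set ε : ℝ := δ / (C * ‖f‖ + 1) with hε
    have hden : (0:ℝ) < C * ‖f‖ + 1 := by positivity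
    have hεpos : 0 < ε := div_pos hδ hden
    obtain ⟨γ, hγ⟩ := hvw ε hεpos F
    set g : L2 X := (B + Mw) f - U γ⁻¹ ((B + Mv) (U γ f)) with hg
    have hgpt : ∀ x, (g : ∀ x, ℂ) x = (w x - v (γ • x)) * f x := by
      intro x
      rw [hg, lp.coeFn_sub, Pi.sub_apply, hpt]
      have : ((B + Mw) f) x = (B f) x + w x * f x := by
        have h1 : (B + Mw) f = B f + Mw f := rfl
        rw [h1, lp.coeFn_add, Pi.add_apply, hMw]
      rw [this]; ring
    have hgnorm : ‖g‖ ≤ ε * ‖f‖ := by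
      refine norm_le_of_pointwise f g ε hεpos.le ?_
      intro x
      rw [hgpt x]
      by_cases hx : x ∈ F
      · rw [norm_mul]
        exact mul_le_mul_of_nonneg_right (hγ x hx).le (norm_nonneg _)
      · rw [hf x hx]; simp
    have key : ‖f‖ ≤ C * ‖(B + Mw) f‖ + C * ‖g‖ := by
      calc ‖f‖ ≤ C * ‖U γ⁻¹ ((B + Mv) (U γ f))‖ := hconj γ f
        _ = C * ‖(B + Mw) f - g‖ := by rw [hg, sub_sub_cancel]
        _ ≤ C * (‖(B + Mw) f‖ + ‖g‖) := by
            refine mul_le_mul_of_nonneg_left ?_ hC0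
            exact (norm_sub_le _ _)
        _ = C * ‖(B + Mw) f‖ + C * ‖g‖ := by ring
    have hsmall : C * ‖g‖ ≤ δ := by
      have h1 : C * ‖g‖ ≤ C * (ε * ‖f‖) := mul_le_mul_of_nonneg_left hgnorm hC0
      have h2 : C * (ε * ‖f‖) = ε * (C * ‖f‖) := by ring
      have h3 : ε * (C * ‖f‖) ≤ ε * (C * ‖f‖ + 1) :=
        mul_le_mul_of_nonneg_left (by linarith) hεpos.le
      have h4 : ε * (C * ‖f‖ + 1) = δ := by
        rw [hε]; field_simp
      linarith
    linarith
  intro f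
  have hsum := lp.hasSum_single (E := fun _ : X => ℂ) (p := 2) (by norm_num) f
  have htend : Filter.Tendsto (fun s : Finset X => ∑ i ∈ s, lp.single 2 i (f i))
      Filter.atTop (nhds f) := hsum
  have h1 : Filter.Tendsto (fun s : Finset X => ‖∑ i ∈ s, lp.single 2 i (f i)‖)
      Filter.atTop (nhds ‖f‖) := (continuous_norm.tendsto f).comp htend
  have h2 : Filter.Tendsto (fun s : Finset X => C * ‖(B + Mw) (∑ i ∈ s, lp.single 2 i (f i))‖)
      Filter.atTop (nhds (C * ‖(B + Mw) f‖)) := by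
    have hco : Continuous fun y : L2 X => C * ‖(B + Mw) y‖ :=
      continuous_const.mul (continuous_norm.comp (B + Mw).continuous)
    exact (hco.tendsto f).comp htend
  refine le_of_tendsto_of_tendsto' h1 h2 ?_
  intro s
  refine hfin s _ ?_
  intro x hx
  rw [lp.coeFn_sum, Finset.sum_apply]
  refine Finset.sum_eq_zero ?_
  intro i hi
  exact lp.single_apply_ne 2 i _ (fun h => hx (h ▸ hi))

end PEaux

/-- A potential `V : X → ℂ` with values in `M` is `(Γ, M)` pseudo-ergodic if for every `ε > 0`,
every finite `F ⊆ X` and every `W : F → M` there is `γ ∈ Γ` with `|W x - V (γ • x)| < ε` on `F`. -/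
def IsPseudoErgodic {X : Type*} (Γ : Type*) [Group Γ] [MulAction Γ X]
    (M : Set ℂ) (V : X → ℂ) : Prop :=
  (∀ x, V x ∈ M) ∧
  ∀ ε > (0 : ℝ), ∀ F : Finset X, ∀ W : X → ℂ, (∀ x ∈ F, W x ∈ M) →
    ∃ γ : Γ, ∀ x ∈ F, ‖W x - V (γ • x)‖ < ε

set_option maxHeartbeats 1000000 in
theorem spec_subset_of_pseudoErgodic
    {X Γ : Type*} [Countable X] [Group Γ] [MulAction Γ X]
    (M : Set ℂ) (hMcl : IsClosed M) (hMbd : Bornology.IsBounded M)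
    -- the translation unitaries `U γ f x = f (γ⁻¹ • x)`
    (U : Γ → (L2 X →L[ℂ] L2 X))
    (hU : ∀ γ (f : L2 X) (x : X), (U γ f) x = f (γ⁻¹ • x))
    -- `H₀` is bounded and commutes with every `U γ`
    (H₀ : L2 X →L[ℂ] L2 X) (hH₀ : ∀ γ : Γ, H₀ ∘L U γ = U γ ∘L H₀)
    -- `V` pseudo-ergodic, `W` an arbitrary potential with values in `M`
    (V W : X → ℂ) (hV : IsPseudoErgodic Γ M V) (hW : ∀ x, W x ∈ M)
    -- the corresponding multiplication operators
    (MV MW : L2 X →L[ℂ] L2 X)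
    (hMV : ∀ (f : L2 X) (x : X), (MV f) x = V x * f x)
    (hMW : ∀ (f : L2 X) (x : X), (MW f) x = W x * f x) :
    spectrum ℂ (H₀ + MW) ⊆ spectrum ℂ (H₀ + MV) := by
  classical
  intro z hz
  by_contra hns
  rw [spectrum.notMem_iff] at hns
  obtain ⟨u, hu⟩ := hns
  set R : L2 X →L[ℂ] L2 X := ↑u⁻¹ with hR
  set C : ℝ := ‖R‖ with hCdef
  -- bound on M
  obtain ⟨B0, hB0⟩ := hMbd.exists_norm_le
  set c : ℝ := max B0 0 with hcdef
  have hc0 : (0:ℝ) ≤ c := le_max_right _ _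
  have hVb : ∀ x, ‖conj (V x)‖ ≤ c := fun x => by
    rw [RCLike.norm_conj]
    exact le_trans (hB0 _ (hV.1 x)) (le_max_left _ _)
  have hWb : ∀ x, ‖conj (W x)‖ ≤ c := fun x => by
    rw [RCLike.norm_conj]
    exact le_trans (hB0 _ (hW x)) (le_max_left _ _)
  set A : L2 X →L[ℂ] L2 X := algebraMap ℂ (L2 X →L[ℂ] L2 X) z - H₀ with hA
  have hH : A + (-MV) = algebraMap ℂ (L2 X →L[ℂ] L2 X) z - (H₀ + MV) := by
    rw [hA]; abel
  have hK : A + (-MW) = algebraMap ℂ (L2 X →L[ℂ] L2 X) z - (H₀ + MW) := by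
    rw [hA]; abel
  -- direct lower bound from invertibility
  have hbound : ∀ f, ‖f‖ ≤ C * ‖(A + (-MV)) f‖ := by
    intro f
    have hmul : R * (algebraMap ℂ (L2 X →L[ℂ] L2 X) z - (H₀ + MV)) = 1 := by
      rw [hR, ← hu]; exact u.inv_mul
    have h1 : R ((A + -MV) f) = f := by
      rw [hH]
      calc R ((algebraMap ℂ (L2 X →L[ℂ] L2 X) z - (H₀ + MV)) f)
          = (R * (algebraMap ℂ (L2 X →L[ℂ] L2 X) z - (H₀ + MV))) f := rfl
        _ = f := by rw [hmul]; rfl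
    calc ‖f‖ = ‖R ((A + -MV) f)‖ := by rw [h1]
      _ ≤ ‖R‖ * ‖(A + -MV) f‖ := R.le_opNorm _
  -- commutation of A with U γ
  have hAU : ∀ γ, A ∘L U γ = U γ ∘L A := by
    intro γ
    ext f
    have hcomm : H₀ (U γ f) = U γ (H₀ f) := by
      have := congrArg (fun (T : L2 X →L[ℂ] L2 X) => T f) (hH₀ γ)
      simpa using this
    simp only [ContinuousLinearMap.coe_comp', Function.comp_apply, hA,
      ContinuousLinearMap.sub_apply, Algebra.algebraMap_eq_smul_one,
      ContinuousLinearMap.smul_apply, ContinuousLinearMap.one_apply, map_sub, map_smul, hcomm]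
  -- pseudo-ergodic approximation for the pair (-V, -W)
  have happrox : ∀ ε > (0:ℝ), ∀ F : Finset X, ∃ γ : Γ,
      ∀ x ∈ F, ‖(fun y => -W y) x - (fun y => -V y) (γ • x)‖ < ε := by
    intro ε hε F
    obtain ⟨γ, hγ⟩ := hV.2 ε hε F W (fun x _ => hW x)
    refine ⟨γ, fun x hx => ?_⟩
    have : (fun y => -W y) x - (fun y => -V y) (γ • x) = -(W x - V (γ • x)) := by ring
    rw [this, norm_neg]
    exact hγ x hx
  have hMvneg : ∀ (f : L2 X) x, ((-MV) f) x = (fun y => -V y) x * f x := fun f x => by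
    rw [ContinuousLinearMap.neg_apply, lp.coeFn_neg, Pi.neg_apply, hMV]; ring
  have hMwneg : ∀ (f : L2 X) x, ((-MW) f) x = (fun y => -W y) x * f x := fun f x => by
    rw [ContinuousLinearMap.neg_apply, lp.coeFn_neg, Pi.neg_apply, hMW]; ring
  have hClow := PEaux.transfer U hU A hAU (fun y => -V y) (fun y => -W y) (-MV) (-MW)
    hMvneg hMwneg happrox C (norm_nonneg R) hbound
  rw [hK] at hClow
  -- adjoint side
  set R' : L2 X →L[ℂ] L2 X := ContinuousLinearMap.adjoint R with hR'
  set C' : ℝ := ‖R'‖ with hC'def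
  set MV' : L2 X →L[ℂ] L2 X := PEaux.mulOp (fun x => conj (V x)) c hc0 hVb with hMV'
  set MW' : L2 X →L[ℂ] L2 X := PEaux.mulOp (fun x => conj (W x)) c hc0 hWb with hMW'
  have hadjMV : ContinuousLinearMap.adjoint MV = MV' :=
    PEaux.adjoint_eq_of_mul MV MV' V hMV (fun f x => by rw [hMV']; rfl)
  have hadjMW : ContinuousLinearMap.adjoint MW = MW' :=
    PEaux.adjoint_eq_of_mul MW MW' W hMW (fun f x => by rw [hMW']; rfl)
  set A' : L2 X →L[ℂ] L2 X :=
    algebraMap ℂ (L2 X →L[ℂ] L2 X) (conj z) - ContinuousLinearMap.adjoint H₀ with hA'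
  have hadjA : ContinuousLinearMap.adjoint A = A' := by
    rw [hA, hA', map_sub, Algebra.algebraMap_eq_smul_one, Algebra.algebraMap_eq_smul_one,
      map_smulₛₗ]
    congr 1
    rw [ContinuousLinearMap.one_def, ContinuousLinearMap.adjoint_id]
  -- adjoint T identities
  have hadjH : ContinuousLinearMap.adjoint (algebraMap ℂ (L2 X →L[ℂ] L2 X) z - (H₀ + MV))
      = A' + (-MV') := by
    rw [← hH, map_add, hadjA, map_neg, hadjMV]
  have hadjK : ContinuousLinearMap.adjoint (algebraMap ℂ (L2 X →L[ℂ] L2 X) z - (H₀ + MW))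
      = A' + (-MW') := by
    rw [← hK, map_add, hadjA, map_neg, hadjMW]
  -- adjoint lower bound
  have hbound' : ∀ f, ‖f‖ ≤ C' * ‖(A' + (-MV')) f‖ := by
    intro f
    have hmul : (algebraMap ℂ (L2 X →L[ℂ] L2 X) z - (H₀ + MV)) * R = 1 := by
      rw [hR, ← hu]; exact u.mul_inv
    have hcomp : R' ∘L (A' + (-MV')) = 1 := by
      rw [← hadjH, hR', ← ContinuousLinearMap.adjoint_comp]
      have : (algebraMap ℂ (L2 X →L[ℂ] L2 X) z - (H₀ + MV)) ∘L R = 1 := hmul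
      rw [this]
      rw [ContinuousLinearMap.one_def, ContinuousLinearMap.adjoint_id]
    have h1 : R' ((A' + -MV') f) = f := by
      have := congrArg (fun (T : L2 X →L[ℂ] L2 X) => T f) hcomp
      simpa using this
    calc ‖f‖ = ‖R' ((A' + -MV') f)‖ := by rw [h1]
      _ ≤ ‖R'‖ * ‖(A' + -MV') f‖ := R'.le_opNorm _
  -- commutation of A' with U γ
  have hH₀' : ∀ γ, (ContinuousLinearMap.adjoint H₀) ∘L U γ = U γ ∘L (ContinuousLinearMap.adjoint H₀) := by
    intro γ
    have e1 : U γ = ContinuousLinearMap.adjoint (U γ⁻¹) := by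
      rw [PEaux.adjoint_U U hU γ⁻¹, inv_inv]
    rw [e1, ← ContinuousLinearMap.adjoint_comp, ← hH₀ γ⁻¹, ContinuousLinearMap.adjoint_comp]
  have hA'U : ∀ γ, A' ∘L U γ = U γ ∘L A' := by
    intro γ
    ext f
    have hcomm : (ContinuousLinearMap.adjoint H₀) (U γ f) = U γ ((ContinuousLinearMap.adjoint H₀) f) := by
      have := congrArg (fun (T : L2 X →L[ℂ] L2 X) => T f) (hH₀' γ)
      simpa using this
    simp only [ContinuousLinearMap.coe_comp', Function.comp_apply, hA',
      ContinuousLinearMap.sub_apply, Algebra.algebraMap_eq_smul_one,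
      ContinuousLinearMap.smul_apply, ContinuousLinearMap.one_apply, map_sub, map_smul, hcomm]
  -- approximation for conjugated potentials
  have happrox' : ∀ ε > (0:ℝ), ∀ F : Finset X, ∃ γ : Γ,
      ∀ x ∈ F, ‖(fun y => -conj (W y)) x - (fun y => -conj (V y)) (γ • x)‖ < ε := by
    intro ε hε F
    obtain ⟨γ, hγ⟩ := hV.2 ε hε F W (fun x _ => hW x)
    refine ⟨γ, fun x hx => ?_⟩
    have : (fun y => -conj (W y)) x - (fun y => -conj (V y)) (γ • x)
        = -(conj (W x) - conj (V (γ • x))) := by ring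
    rw [this, norm_neg, ← map_sub, RCLike.norm_conj]
    exact hγ x hx
  have hMv'neg : ∀ (f : L2 X) x, ((-MV') f) x = (fun y => -conj (V y)) x * f x := fun f x => by
    rw [ContinuousLinearMap.neg_apply, lp.coeFn_neg, Pi.neg_apply, hMV']
    change -(conj (V x) * f x) = _
    ring
  have hMw'neg : ∀ (f : L2 X) x, ((-MW') f) x = (fun y => -conj (W y)) x * f x := fun f x => by
    rw [ContinuousLinearMap.neg_apply, lp.coeFn_neg, Pi.neg_apply, hMW']
    change -(conj (W x) * f x) = _
    ring
  have hClow' := PEaux.transfer U hU A' hA'U (fun y => -conj (V y)) (fun y => -conj (W y))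
    (-MV') (-MW') hMv'neg hMw'neg happrox' C' (norm_nonneg R') hbound'
  -- conclude invertibility of K - z
  have hKunit : IsUnit (algebraMap ℂ (L2 X →L[ℂ] L2 X) z - (H₀ + MW)) := by
    refine PEaux.isUnit_of_bounded_below _ C C' (norm_nonneg R) hClow ?_
    intro f
    rw [hadjK]
    exact hClow' f
  rw [spectrum.mem_iff] at hz
  exact hz hKunit
end
end

section
/- Under the hypotheses of the pseudo-ergodic inclusion theorem, if V and W are both (Γ,𝓜) pseudo-ergodic potentials, then Spec(H₀ + V) = Spec(H₀ + W). Moreover, Spec(H₀ + V) equals the closure-free union ⋃{Spec(H₀ + W) : W ∈ 𝓜^X} over all potentials W with values in 𝓜. -/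
noncomputable section

namespace PEAux

open scoped ComplexConjugate ENNReal InnerProductSpace
open ContinuousLinearMap

variable {X : Type*}

lemma hp2R : 0 < (2 : ℝ≥0∞).toReal := by norm_num

lemma norm_le_norm_of_coord {f g : L2 X} (h : ∀ x, ‖f x‖ ≤ ‖g x‖) : ‖f‖ ≤ ‖g‖ := by
  rw [lp.norm_eq_tsum_rpow hp2R, lp.norm_eq_tsum_rpow hp2R]
  apply Real.rpow_le_rpow (tsum_nonneg fun x : X => Real.rpow_nonneg (norm_nonneg (f x)) _)
  · exact Summable.tsum_le_tsum (fun x => Real.rpow_le_rpow (norm_nonneg _) (h x) hp2R.le)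
      ((lp.memℓp f).summable hp2R) ((lp.memℓp g).summable hp2R)
  · positivity

lemma norm_eq_of_perm (e : Equiv.Perm X) {f g : L2 X} (h : ∀ x, g x = f (e x)) :
    ‖g‖ = ‖f‖ := by
  rw [lp.norm_eq_tsum_rpow hp2R, lp.norm_eq_tsum_rpow hp2R]
  congr 1
  calc ∑' x, ‖g x‖ ^ (2 : ℝ≥0∞).toReal
      = ∑' x, ‖f (e x)‖ ^ (2 : ℝ≥0∞).toReal := by simp_rw [h]
    _ = _ := e.tsum_eq (fun x => ‖f x‖ ^ (2 : ℝ≥0∞).toReal)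

lemma inner_single_right [DecidableEq X] (f : L2 X) (x : X) :
    ⟪f, lp.single 2 x (1 : ℂ)⟫_ℂ = (starRingEnd ℂ) (f x) := by
  rw [lp.inner_eq_tsum]
  rw [tsum_eq_single x]
  · simp [lp.single_apply_self]
  · intro b hb
    simp [lp.single_apply_ne _ _ _ hb, Pi.single_apply, hb]

lemma adjoint_mul_formula [DecidableEq X] {Wf : X → ℂ} {MWf : L2 X →L[ℂ] L2 X}
    (hMWf : ∀ (f : L2 X) (x : X), (MWf f) x = Wf x * f x)
    (f : L2 X) (x : X) : ((adjoint MWf) f) x = (starRingEnd ℂ) (Wf x) * f x := by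
  have h1 : ⟪(adjoint MWf) f, lp.single 2 x 1⟫_ℂ = ⟪f, MWf (lp.single 2 x 1)⟫_ℂ := by
    rw [adjoint_inner_left]
  rw [inner_single_right] at h1
  have h2 : ⟪f, MWf (lp.single 2 x 1)⟫_ℂ = (starRingEnd ℂ) (f x) * Wf x := by
    rw [lp.inner_eq_tsum, tsum_eq_single x]
    · simp only [hMWf, lp.single_apply_self, RCLike.inner_apply]
      ring_nf
    · intro b hb
      simp [hMWf, lp.single_apply_ne _ _ _ hb, Pi.single_apply, hb]
  have := h1.trans h2
  have := congrArg (starRingEnd ℂ) this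
  simpa [mul_comm] using this

lemma isUnit_of_bddBelow_both {E : Type*} [NormedAddCommGroup E] [InnerProductSpace ℂ E]
    [CompleteSpace E] (B : E →L[ℂ] E) {C C' : ℝ}
    (h : ∀ f, ‖f‖ ≤ C * ‖B f‖) (h' : ∀ f, ‖f‖ ≤ C' * ‖(adjoint B) f‖) :
    IsUnit B := by
  have hker : B.ker = ⊥ := by
    rw [LinearMap.ker_eq_bot']
    intro f hf
    have := h f
    erw [hf] at this
    simp only [norm_zero, mul_zero] at this
    exact norm_le_zero_iff.mp this
  set K : ℝ := max C 1 with hK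
  have hK1 : (1 : ℝ) ≤ K := le_max_right _ _
  have hbd : ∀ f, ‖f‖ ≤ K * ‖B f‖ := fun f =>
    (h f).trans (mul_le_mul_of_nonneg_right (le_max_left _ _) (norm_nonneg _))
  have hanti : AntilipschitzWith (⟨K, by linarith⟩ : NNReal) B :=
    AddMonoidHomClass.antilipschitz_of_bound (B : E →L[ℂ] E) hbd
  have hclosed : IsClosed (B.range : Set E) := by
    have : (B.range : Set E) = Set.range B := by
      ext x; simp [LinearMap.mem_range]
    rw [this]
    exact hanti.isClosed_range B.uniformContinuous
  have hbot : (B.range)ᗮ = ⊥ := by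
    rw [Submodule.eq_bot_iff]
    intro g hg
    have hBg : adjoint B g = 0 := by
      have hfg : ∀ f : E, ⟪f, adjoint B g⟫_ℂ = 0 := by
        intro f
        rw [adjoint_inner_right]
        exact (Submodule.mem_orthogonal _ _).mp hg _ (LinearMap.mem_range_self _ f)
      exact inner_self_eq_zero.mp (hfg (adjoint B g))
    have := h' g
    rw [hBg] at this
    simp only [norm_zero, mul_zero] at this
    exact norm_le_zero_iff.mp this
  have hrange : B.range = ⊤ := by
    have h1 : (B.range).topologicalClosure = B.range :=
      hclosed.submodule_topologicalClosure_eq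
    have h2 : (B.range)ᗮᗮ = (B.range).topologicalClosure :=
      (B.range).orthogonal_orthogonal_eq_closure
    rw [hbot, Submodule.bot_orthogonal_eq_top] at h2
    rw [← h1, ← h2]
  let e := ContinuousLinearEquiv.ofBijective B hker hrange
  refine ⟨⟨B, e.symm.toContinuousLinearMap, ?_, ?_⟩, rfl⟩
  · ext x
    exact e.apply_symm_apply x
  · ext x
    exact e.symm_apply_apply x

variable {Γ : Type*} [Group Γ] [MulAction Γ X]

lemma U_adjoint (U : Γ → (L2 X →L[ℂ] L2 X))
    (hU : ∀ γ (f : L2 X) (x : X), (U γ f) x = f (γ⁻¹ • x)) (γ : Γ) :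
    adjoint (U γ) = U γ⁻¹ := by
  symm
  rw [eq_adjoint_iff]
  intro x y
  rw [lp.inner_eq_tsum, lp.inner_eq_tsum]
  have key : ∀ i : X, (⟪(U γ⁻¹ x) i, y i⟫_ℂ)
      = (fun i => ⟪x i, (U γ y) i⟫_ℂ) (γ • i) := by
    intro i
    simp only [hU, inv_inv, inv_smul_smul]
  calc ∑' i, ⟪(U γ⁻¹ x) i, y i⟫_ℂ
      = ∑' i, (fun i => ⟪x i, (U γ y) i⟫_ℂ) (γ • i) := by simp_rw [key]
    _ = ∑' i, ⟪x i, (U γ y) i⟫_ℂ :=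
        (MulAction.toPerm γ).tsum_eq (fun i => ⟪x i, (U γ y) i⟫_ℂ)

lemma bddBelow_key
    (U : Γ → (L2 X →L[ℂ] L2 X))
    (hU : ∀ γ (f : L2 X) (x : X), (U γ f) x = f (γ⁻¹ • x))
    (H : L2 X →L[ℂ] L2 X) (hH : ∀ γ : Γ, H ∘L U γ = U γ ∘L H)
    (V W' : X → ℂ)
    (MV MW' : L2 X →L[ℂ] L2 X)
    (hMV : ∀ (f : L2 X) (x : X), (MV f) x = V x * f x)
    (hMW' : ∀ (f : L2 X) (x : X), (MW' f) x = W' x * f x)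
    (happrox : ∀ ε > (0:ℝ), ∀ F : Finset X,
      ∃ γ : Γ, ∀ x ∈ F, ‖W' x - V (γ • x)‖ < ε)
    (lam : ℂ) (hA : IsUnit (algebraMap ℂ (L2 X →L[ℂ] L2 X) lam - (H + MV))) :
    ∀ f : L2 X, ‖f‖ ≤ ‖((hA.unit⁻¹ : (L2 X →L[ℂ] L2 X)ˣ) : L2 X →L[ℂ] L2 X)‖ *
      ‖(algebraMap ℂ (L2 X →L[ℂ] L2 X) lam - (H + MW')) f‖ := by
  classical
  set A : L2 X →L[ℂ] L2 X := algebraMap ℂ (L2 X →L[ℂ] L2 X) lam - (H + MV) with hAdef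
  set B : L2 X →L[ℂ] L2 X := algebraMap ℂ (L2 X →L[ℂ] L2 X) lam - (H + MW') with hBdef
  set Ainv : L2 X →L[ℂ] L2 X := ((hA.unit⁻¹ : (L2 X →L[ℂ] L2 X)ˣ) : L2 X →L[ℂ] L2 X)
    with hAinvdef
  set C : ℝ := ‖Ainv‖ with hCdef
  have hC0 : 0 ≤ C := norm_nonneg _
  have hAlower : ∀ g : L2 X, ‖g‖ ≤ C * ‖A g‖ := by
    intro g
    have h1 : Ainv * A = 1 := by
      have h := hA.unit.inv_mul
      rwa [IsUnit.unit_spec] at h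
    have h2 : g = Ainv (A g) := by
      have h := congrArg (fun (T : L2 X →L[ℂ] L2 X) => T g) h1
      simpa [ContinuousLinearMap.mul_apply] using h.symm
    calc ‖g‖ = ‖Ainv (A g)‖ := by rw [← h2]
      _ ≤ C * ‖A g‖ := Ainv.le_opNorm _
  have hAco : ∀ (g : L2 X) (x : X), (A g) x = lam * g x - (H g) x - V x * g x := by
    intro g x
    rw [hAdef]
    simp [ContinuousLinearMap.sub_apply, ContinuousLinearMap.add_apply,
      Algebra.algebraMap_eq_smul_one, ContinuousLinearMap.smul_apply,
      ContinuousLinearMap.one_apply, lp.coeFn_sub, lp.coeFn_smul, Pi.sub_apply, Pi.smul_apply,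
      hMV, smul_eq_mul]
    erw [Pi.sub_apply, Pi.add_apply, Pi.smul_apply, hMV, smul_eq_mul]
    ring
  have hBco : ∀ (g : L2 X) (x : X), (B g) x = lam * g x - (H g) x - W' x * g x := by
    intro g x
    rw [hBdef]
    simp [ContinuousLinearMap.sub_apply, ContinuousLinearMap.add_apply,
      Algebra.algebraMap_eq_smul_one, ContinuousLinearMap.smul_apply,
      ContinuousLinearMap.one_apply, lp.coeFn_sub, lp.coeFn_smul, Pi.sub_apply, Pi.smul_apply,
      hMW', smul_eq_mul]
    erw [Pi.sub_apply, Pi.add_apply, Pi.smul_apply, hMW', smul_eq_mul]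
    ring
  have step1 : ∀ (s : Finset X) (f : L2 X), (∀ x, x ∉ s → f x = 0) →
      ∀ ε : ℝ, 0 < ε → ‖f‖ ≤ C * ‖B f‖ + C * (ε * ‖f‖) := by
    intro s f hf ε hε
    obtain ⟨γ, hγ⟩ := happrox ε hε s
    have hUnorm : ∀ g : L2 X, ‖U γ g‖ = ‖g‖ := by
      intro g
      exact norm_eq_of_perm (MulAction.toPerm (γ⁻¹ : Γ)) (fun x => hU γ g x)
    set D : L2 X := A (U γ f) - U γ (B f) with hDdef
    have hHcomm : ∀ (g : L2 X) (x : X), (H (U γ g)) x = (H g) (γ⁻¹ • x) := by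
      intro g x
      have := congrArg (fun (T : L2 X →L[ℂ] L2 X) => T g) (hH γ)
      simp only [ContinuousLinearMap.comp_apply] at this
      rw [this, hU]
    have hDx : ∀ x, D x = (W' (γ⁻¹ • x) - V x) * f (γ⁻¹ • x) := by
      intro x
      rw [hDdef]
      rw [lp.coeFn_sub, Pi.sub_apply, hAco, hU, hU, hHcomm, hBco]
      ring
    have hDle : ∀ x, ‖D x‖ ≤ ‖(((ε : ℂ)) • U γ f) x‖ := by
      intro x
      rw [hDx, lp.coeFn_smul, Pi.smul_apply, smul_eq_mul]
      by_cases hx : γ⁻¹ • x ∈ s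
      · have h1 := hγ _ hx
        rw [smul_inv_smul] at h1
        rw [norm_mul, norm_mul]
        have : ‖(ε : ℂ)‖ = ε := by
          rw [Complex.norm_real, Real.norm_eq_abs, abs_of_pos hε]
        rw [this, hU]
        exact mul_le_mul_of_nonneg_right h1.le (norm_nonneg _)
      · rw [hf _ hx]
        simp only [mul_zero, norm_zero]
        positivity
    have hDnorm : ‖D‖ ≤ ε * ‖f‖ := by
      refine (norm_le_norm_of_coord hDle).trans ?_
      rw [norm_smul]
      have : ‖(ε : ℂ)‖ = ε := by
        rw [Complex.norm_real, Real.norm_eq_abs, abs_of_pos hε]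
      rw [this, hUnorm]
    have hsplit : A (U γ f) = U γ (B f) + D := by rw [hDdef]; abel
    calc ‖f‖ = ‖U γ f‖ := (hUnorm f).symm
      _ ≤ C * ‖A (U γ f)‖ := hAlower _
      _ = C * ‖U γ (B f) + D‖ := by rw [hsplit]
      _ ≤ C * (‖U γ (B f)‖ + ‖D‖) :=
          mul_le_mul_of_nonneg_left (norm_add_le _ _) hC0
      _ = C * (‖B f‖ + ‖D‖) := by rw [hUnorm]
      _ ≤ C * (‖B f‖ + ε * ‖f‖) :=
          mul_le_mul_of_nonneg_left (by linarith) hC0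
      _ = C * ‖B f‖ + C * (ε * ‖f‖) := by ring
  have step2 : ∀ (s : Finset X) (f : L2 X), (∀ x, x ∉ s → f x = 0) →
      ‖f‖ ≤ C * ‖B f‖ := by
    intro s f hf
    refine le_of_forall_pos_le_add ?_
    intro δ hδ
    have hden : (0:ℝ) < C * ‖f‖ + 1 := by positivity
    have hε : (0:ℝ) < δ / (C * ‖f‖ + 1) := div_pos hδ hden
    have h1 := step1 s f hf _ hε
    have h2 : C * (δ / (C * ‖f‖ + 1) * ‖f‖) ≤ δ := by
      rw [show C * (δ / (C * ‖f‖ + 1) * ‖f‖) = (C * ‖f‖) * (δ / (C * ‖f‖ + 1)) by ring]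
      calc (C * ‖f‖) * (δ / (C * ‖f‖ + 1)) ≤ (C * ‖f‖ + 1) * (δ / (C * ‖f‖ + 1)) :=
            mul_le_mul_of_nonneg_right (by linarith) hε.le
        _ = δ := by field_simp
    linarith
  intro f
  have hS : IsClosed {g : L2 X | ‖g‖ ≤ C * ‖B g‖} :=
    isClosed_le continuous_norm (continuous_const.mul B.continuous.norm)
  have hsum : HasSum (fun i : X => lp.single 2 i (f i)) f :=
    lp.hasSum_single (by norm_num) f
  have hmem : ∀ t : Finset X,
      (∑ i ∈ t, lp.single 2 i (f i)) ∈ {g : L2 X | ‖g‖ ≤ C * ‖B g‖} := by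
    intro t
    refine step2 t _ ?_
    intro x hx
    rw [lp.coeFn_sum, Finset.sum_apply]
    refine Finset.sum_eq_zero fun i hi => ?_
    exact lp.single_apply_ne 2 i _ (fun h => hx (h ▸ hi))
  exact hS.mem_of_tendsto hsum (Filter.Eventually.of_forall hmem)

set_option maxHeartbeats 1000000 in
lemma spec_subset (M : Set ℂ)
    (U : Γ → (L2 X →L[ℂ] L2 X))
    (hU : ∀ γ (f : L2 X) (x : X), (U γ f) x = f (γ⁻¹ • x))
    (H : L2 X →L[ℂ] L2 X) (hH : ∀ γ : Γ, H ∘L U γ = U γ ∘L H)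
    (V : X → ℂ) (hV : IsPseudoErgodic Γ M V)
    (MV : L2 X →L[ℂ] L2 X) (hMV : ∀ (f : L2 X) (x : X), (MV f) x = V x * f x)
    (W' : X → ℂ) (hW'M : ∀ x, W' x ∈ M)
    (MW' : L2 X →L[ℂ] L2 X) (hMW' : ∀ (f : L2 X) (x : X), (MW' f) x = W' x * f x) :
    spectrum ℂ (H + MW') ⊆ spectrum ℂ (H + MV) := by
  classical
  have key : ∀ lam : ℂ, lam ∉ spectrum ℂ (H + MV) → lam ∉ spectrum ℂ (H + MW') := by
    intro lam h
    rw [spectrum.notMem_iff] at h ⊢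
    have approx1 : ∀ ε > (0:ℝ), ∀ F : Finset X,
        ∃ γ : Γ, ∀ x ∈ F, ‖W' x - V (γ • x)‖ < ε := by
      intro ε hε F
      exact hV.2 ε hε F W' (fun x _ => hW'M x)
    have bound1 := bddBelow_key U hU H hH V W' MV MW' hMV hMW' approx1 lam h
    -- adjoint side
    have hHadj : ∀ γ : Γ, adjoint H ∘L U γ = U γ ∘L adjoint H := by
      intro γ
      have h1 := congrArg adjoint (hH γ⁻¹)
      rw [adjoint_comp, adjoint_comp, U_adjoint U hU, inv_inv] at h1
      exact h1.symm
    have approx2 : ∀ ε > (0:ℝ), ∀ F : Finset X,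
        ∃ γ : Γ, ∀ x ∈ F,
          ‖(starRingEnd ℂ) (W' x) - (starRingEnd ℂ) (V (γ • x))‖ < ε := by
      intro ε hε F
      obtain ⟨γ, hγ⟩ := hV.2 ε hε F W' (fun x _ => hW'M x)
      refine ⟨γ, fun x hx => ?_⟩
      rw [← map_sub, Complex.norm_conj]
      exact hγ x hx
    have hAdjUnit : IsUnit (algebraMap ℂ (L2 X →L[ℂ] L2 X) ((starRingEnd ℂ) lam)
        - (adjoint H + adjoint MV)) := by
      have hs := h.star
      rwa [star_sub, star_add, ← algebraMap_star_comm, star_eq_adjoint, star_eq_adjoint,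
        Complex.star_def] at hs
    have bound2 := bddBelow_key U hU (adjoint H) hHadj
      (fun x => (starRingEnd ℂ) (V x)) (fun x => (starRingEnd ℂ) (W' x))
      (adjoint MV) (adjoint MW')
      (fun f x => adjoint_mul_formula hMV f x)
      (fun f x => adjoint_mul_formula hMW' f x)
      approx2 ((starRingEnd ℂ) lam) hAdjUnit
    have hadjB : adjoint (algebraMap ℂ (L2 X →L[ℂ] L2 X) lam - (H + MW'))
        = algebraMap ℂ (L2 X →L[ℂ] L2 X) ((starRingEnd ℂ) lam)
          - (adjoint H + adjoint MW') := by
      rw [← star_eq_adjoint, star_sub, star_add, ← algebraMap_star_comm, star_eq_adjoint,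
        star_eq_adjoint, Complex.star_def]
    exact isUnit_of_bddBelow_both _ bound1 (fun f => by rw [hadjB]; exact bound2 f)
  intro lam hlam
  by_contra hnot
  exact key lam hnot hlam

end PEAux

theorem spec_eq_of_pseudoErgodic_and_union
    {X Γ : Type*} [Countable X] [Group Γ] [MulAction Γ X]
    (M : Set ℂ) (hMcl : IsClosed M) (hMbd : Bornology.IsBounded M)
    (U : Γ → (L2 X →L[ℂ] L2 X))
    (hU : ∀ γ (f : L2 X) (x : X), (U γ f) x = f (γ⁻¹ • x))
    (H₀ : L2 X →L[ℂ] L2 X) (hH₀ : ∀ γ : Γ, H₀ ∘L U γ = U γ ∘L H₀)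
    (V W : X → ℂ) (hV : IsPseudoErgodic Γ M V) (hW : IsPseudoErgodic Γ M W)
    (MV MW : L2 X →L[ℂ] L2 X)
    (hMV : ∀ (f : L2 X) (x : X), (MV f) x = V x * f x)
    (hMW : ∀ (f : L2 X) (x : X), (MW f) x = W x * f x) :
    spectrum ℂ (H₀ + MV) = spectrum ℂ (H₀ + MW) ∧
    spectrum ℂ (H₀ + MV) =
      ⋃ (W' : X → ℂ) (_ : ∀ x, W' x ∈ M)
        (MW' : L2 X →L[ℂ] L2 X) (_ : ∀ (f : L2 X) (x : X), (MW' f) x = W' x * f x),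
        spectrum ℂ (H₀ + MW') := by
  constructor
  · apply subset_antisymm
    · exact PEAux.spec_subset M U hU H₀ hH₀ W hW MW hMW V hV.1 MV hMV
    · exact PEAux.spec_subset M U hU H₀ hH₀ V hV MV hMV W hW.1 MW hMW
  · apply subset_antisymm
    · intro lam hlam
      exact Set.mem_iUnion.mpr ⟨V, Set.mem_iUnion.mpr ⟨hV.1,
        Set.mem_iUnion.mpr ⟨MV, Set.mem_iUnion.mpr ⟨hMV, hlam⟩⟩⟩⟩
    · refine Set.iUnion_subset fun W' => Set.iUnion_subset fun hW'M =>
        Set.iUnion_subset fun MW' => Set.iUnion_subset fun hMW' => ?_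
      exact PEAux.spec_subset M U hU H₀ hH₀ V hV MV hMV W' hW'M MW' hMW'
end
end

section
/- Let H = H₀ + V where H₀ is a bounded translation-invariant operator on ℓ²(X) with spectrum E, and V is a (Γ,𝓜) pseudo-ergodic scalar potential with values in the closed bounded set 𝓜 ⊆ ℂ. Then E + 𝓜 ⊆ Spec(H), i.e. for every λ ∈ E and m ∈ 𝓜, λ + m lies in the spectrum of H. -/
set_option maxHeartbeats 1000000
set_option synthInstance.maxHeartbeats 200000

noncomputable section

open scoped ComplexConjugate ComplexInnerProductSpace ENNReal NNReal
open ContinuousLinearMap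

namespace PEAux

variable {ι : Type*}

lemma norm_mono (u v : L2 ι) (h : ∀ x, ‖u x‖ ≤ ‖v x‖) : ‖u‖ ≤ ‖v‖ := by
  have hp : 0 < (2 : ℝ≥0∞).toReal := by norm_num
  refine lp.norm_le_of_forall_sum_le hp (norm_nonneg v) (fun s => ?_)
  calc ∑ i ∈ s, ‖u i‖ ^ (2 : ℝ≥0∞).toReal
      ≤ ∑ i ∈ s, ‖v i‖ ^ (2 : ℝ≥0∞).toReal :=
        Finset.sum_le_sum fun i _ => Real.rpow_le_rpow (norm_nonneg _) (h i) hp.le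
    _ ≤ ‖v‖ ^ (2 : ℝ≥0∞).toReal := lp.sum_rpow_le_norm_rpow hp v s

lemma norm_perm (e : Equiv.Perm ι) (u v : L2 ι) (h : ∀ x, u x = v (e x)) : ‖u‖ = ‖v‖ := by
  have hp : 0 < (2 : ℝ≥0∞).toReal := by norm_num
  rw [lp.norm_eq_tsum_rpow hp, lp.norm_eq_tsum_rpow hp]
  congr 1
  calc ∑' x, ‖u x‖ ^ (2 : ℝ≥0∞).toReal
      = ∑' x, (fun y => ‖v y‖ ^ (2 : ℝ≥0∞).toReal) (e x) := by
        congr 1; funext x; rw [h]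
    _ = ∑' x, ‖v x‖ ^ (2 : ℝ≥0∞).toReal :=
        Equiv.tsum_eq e (fun y => ‖v y‖ ^ (2 : ℝ≥0∞).toReal)

lemma coord [DecidableEq ι] (g : L2 ι) (x : ι) : ⟪lp.single 2 x (1 : ℂ), g⟫ = g x := by
  rw [lp.inner_eq_tsum]
  rw [tsum_eq_single x (fun j hj => by
    rw [lp.single_apply_ne 2 x _ hj, inner_zero_left])]
  rw [lp.single_apply_self, RCLike.inner_apply]
  simp

lemma not_isUnit_of_approx {E : Type*} [NormedAddCommGroup E] [NormedSpace ℂ E]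
    (B : E →L[ℂ] E) (h : ∀ c > (0 : ℝ), ∃ f : E, ‖B f‖ < c * ‖f‖) : ¬ IsUnit B := by
  rintro ⟨u, rfl⟩
  set N := ‖(↑u⁻¹ : E →L[ℂ] E)‖ with hN
  obtain ⟨f, hf⟩ := h (1 / (N + 1)) (by positivity)
  have hNn : 0 ≤ N := norm_nonneg _
  have hfpos : 0 < ‖f‖ := by
    by_contra hle
    push_neg at hle
    have hf0 : ‖f‖ = 0 := le_antisymm hle (norm_nonneg f)
    rw [hf0, mul_zero] at hf
    exact absurd hf (not_lt.mpr (norm_nonneg _))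
  have h3 : ((↑u⁻¹ : E →L[ℂ] E) * (↑u : E →L[ℂ] E)) f = f := by
    rw [u.inv_mul, ContinuousLinearMap.one_apply]
  have h2 : ‖f‖ ≤ N * ‖(↑u : E →L[ℂ] E) f‖ := by
    calc ‖f‖ = ‖(↑u⁻¹ : E →L[ℂ] E) ((↑u : E →L[ℂ] E) f)‖ := by
          rw [← ContinuousLinearMap.mul_apply, h3]
      _ ≤ N * ‖(↑u : E →L[ℂ] E) f‖ := ContinuousLinearMap.le_opNorm _ _
  have h5 : ‖f‖ < ‖f‖ := by
    calc ‖f‖ ≤ N * ‖(↑u : E →L[ℂ] E) f‖ := h2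
      _ ≤ (N + 1) * ‖(↑u : E →L[ℂ] E) f‖ := by
          have := norm_nonneg ((↑u : E →L[ℂ] E) f); nlinarith
      _ < (N + 1) * (1 / (N + 1) * ‖f‖) := by
          refine mul_lt_mul_of_pos_left hf (by positivity)
      _ = ‖f‖ := by field_simp
  exact lt_irrefl _ h5

lemma isUnit_of_bddBelow {E : Type*} [NormedAddCommGroup E] [InnerProductSpace ℂ E]
    [CompleteSpace E] (A : E →L[ℂ] E) {c₁ c₂ : ℝ} (h1 : 0 < c₁) (h2 : 0 < c₂)
    (hA : ∀ f, c₁ * ‖f‖ ≤ ‖A f‖)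
    (hA' : ∀ f, c₂ * ‖f‖ ≤ ‖(ContinuousLinearMap.adjoint A) f‖) : IsUnit A := by
  have hker : LinearMap.ker (A : E →ₗ[ℂ] E) = ⊥ := by
    refine LinearMap.ker_eq_bot'.mpr (fun v hv => ?_)
    have hv' : A v = 0 := hv
    have := hA v
    rw [hv', norm_zero] at this
    have hn : ‖v‖ = 0 := le_antisymm (by nlinarith) (norm_nonneg v)
    exact norm_eq_zero.mp hn
  have hclosed : IsClosed ((LinearMap.range (A : E →ₗ[ℂ] E) : Submodule ℂ E) : Set E) := by
    have halip : AntilipschitzWith (⟨c₁⁻¹, by positivity⟩ : ℝ≥0) A := by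
      refine A.antilipschitz_of_bound (fun x => ?_)
      have hx := hA x
      calc ‖x‖ = c₁⁻¹ * (c₁ * ‖x‖) := by field_simp
        _ ≤ c₁⁻¹ * ‖A x‖ := by
            exact mul_le_mul_of_nonneg_left hx (by positivity)
    have hc := halip.isClosed_range A.uniformContinuous
    have : ((LinearMap.range (A : E →ₗ[ℂ] E) : Submodule ℂ E) : Set E) = Set.range A := by
      ext y; simp [LinearMap.mem_range]
    rw [this]
    exact hc
  haveI : CompleteSpace (LinearMap.range (A : E →ₗ[ℂ] E) : Submodule ℂ E) := hclosed.completeSpace_coe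
  have hsurj : LinearMap.range (A : E →ₗ[ℂ] E) = ⊤ := by
    rw [← Submodule.orthogonal_eq_bot_iff]
    rw [Submodule.eq_bot_iff]
    intro v hv
    have hv' : ∀ u : E, ⟪A u, v⟫ = 0 := fun u =>
      (Submodule.mem_orthogonal _ v).mp hv (A u) (LinearMap.mem_range_self _ u)
    have h0 : ContinuousLinearMap.adjoint A v = 0 := by
      have hin : ⟪ContinuousLinearMap.adjoint A v, ContinuousLinearMap.adjoint A v⟫ = 0 := by
        rw [ContinuousLinearMap.adjoint_inner_left, ← inner_conj_symm, hv' _]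
        simp
      exact inner_self_eq_zero.mp hin
    have := hA' v
    rw [h0, norm_zero] at this
    have hn : ‖v‖ = 0 := le_antisymm (by nlinarith) (norm_nonneg v)
    exact norm_eq_zero.mp hn
  let e := ContinuousLinearEquiv.ofBijective A hker hsurj
  refine ⟨⟨A, (e.symm : E →L[ℂ] E), ?_, ?_⟩, rfl⟩
  · ext x
    simp only [ContinuousLinearMap.mul_apply, ContinuousLinearMap.one_apply,
      ContinuousLinearEquiv.coe_coe]
    exact ContinuousLinearEquiv.ofBijective_apply_symm_apply A hker hsurj x
  · ext x
    simp only [ContinuousLinearMap.mul_apply, ContinuousLinearMap.one_apply,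
      ContinuousLinearEquiv.coe_coe]
    exact ContinuousLinearEquiv.ofBijective_symm_apply_apply A hker hsurj x

/-- Core transfer lemma: if `lam • 1 - H` is not bounded below for a translation
invariant `H`, then `(lam + m) • 1 - (H + MV)` has approximate kernel vectors, where
`V` takes values approximately `m` along suitable translates. -/
lemma core {X Γ : Type*} [Group Γ] [MulAction Γ X]
    (U : Γ → (L2 X →L[ℂ] L2 X))
    (hU : ∀ γ (f : L2 X) (x : X), (U γ f) x = f (γ⁻¹ • x))
    (H : L2 X →L[ℂ] L2 X) (hH : ∀ γ : Γ, H ∘L U γ = U γ ∘L H)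
    (V : X → ℂ) (MV : L2 X →L[ℂ] L2 X)
    (hMV : ∀ (f : L2 X) (x : X), (MV f) x = V x * f x)
    (lam m : ℂ)
    (hPE : ∀ ε > (0 : ℝ), ∀ F : Finset X, ∃ γ : Γ, ∀ x ∈ F, ‖m - V (γ • x)‖ < ε)
    (hnb : ∀ c > (0 : ℝ), ∃ f : L2 X, ‖(lam • (1 : L2 X →L[ℂ] L2 X) - H) f‖ < c * ‖f‖) :
    ∀ c > (0 : ℝ), ∃ h : L2 X,
      ‖((lam + m) • (1 : L2 X →L[ℂ] L2 X) - (H + MV)) h‖ < c * ‖h‖ := by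
  haveI := Classical.decEq X
  intro c hc
  set A := lam • (1 : L2 X →L[ℂ] L2 X) - H with hAdef
  set ε := c / 2 with hεdef
  have hε : 0 < ε := by positivity
  obtain ⟨f, hf⟩ := hnb ε hε
  have hfpos : 0 < ‖f‖ := by
    by_contra hle
    push_neg at hle
    have hf0 : ‖f‖ = 0 := le_antisymm hle (norm_nonneg f)
    rw [hf0, mul_zero] at hf
    exact absurd hf (not_lt.mpr (norm_nonneg _))
  set δ := (ε * ‖f‖ - ‖A f‖) / (‖A‖ + ε + 1) with hδdef
  have hδ : 0 < δ := div_pos (by linarith) (by positivity)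
  have hδeq : δ * (‖A‖ + ε + 1) = ε * ‖f‖ - ‖A f‖ := by
    rw [hδdef]
    exact div_mul_cancel₀ _ (by positivity)
  have hsum := lp.hasSum_single (p := 2) (by norm_num) f
  obtain ⟨s, hs⟩ := Metric.tendsto_atTop.mp hsum δ hδ
  set g : L2 X := ∑ i ∈ s, lp.single 2 i (f i) with hgdef
  have hgf : ‖g - f‖ < δ := by
    have := hs s le_rfl
    rwa [dist_eq_norm] at this
  have hg0 : ∀ x ∉ s, g x = 0 := by
    intro x hx
    have hcoe : g x = ∑ i ∈ s, (lp.single 2 i (f i) : L2 X) x := by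
      rw [hgdef, lp.coeFn_sum, Finset.sum_apply]
    rw [hcoe]
    refine Finset.sum_eq_zero (fun i hi => ?_)
    exact lp.single_apply_ne 2 i _ (fun hxi => hx (hxi ▸ hi))
  have hAg : ‖A g‖ < ε * ‖g‖ := by
    have h1 : ‖A g‖ ≤ ‖A f‖ + ‖A‖ * ‖g - f‖ := by
      have e1 : A f + (A g - A f) = A g := by abel
      calc ‖A g‖ = ‖A f + (A g - A f)‖ := by rw [e1]
        _ ≤ ‖A f‖ + ‖A g - A f‖ := norm_add_le _ _
        _ = ‖A f‖ + ‖A (g - f)‖ := by rw [map_sub]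
        _ ≤ ‖A f‖ + ‖A‖ * ‖g - f‖ := by
            exact add_le_add le_rfl (A.le_opNorm _)
    have h2 : ‖f‖ - ‖g - f‖ ≤ ‖g‖ := by
      have h2' := norm_sub_norm_le f g
      rw [norm_sub_rev] at h2'
      linarith
    have P1 : ‖A‖ * ‖g - f‖ ≤ ‖A‖ * δ := mul_le_mul_of_nonneg_left hgf.le (norm_nonneg _)
    have P2 : ε * (‖f‖ - ‖g - f‖) ≤ ε * ‖g‖ := mul_le_mul_of_nonneg_left h2 hε.le
    have P3 : ε * ‖g - f‖ < ε * δ := mul_lt_mul_of_pos_left hgf hε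
    nlinarith [h1, P1, P2, P3, hδeq, hδ]
  have hgpos : 0 < ‖g‖ := by
    by_contra hle
    push_neg at hle
    have hg0' : ‖g‖ = 0 := le_antisymm hle (norm_nonneg g)
    rw [hg0', mul_zero] at hAg
    exact absurd hAg (not_lt.mpr (norm_nonneg _))
  obtain ⟨γ, hγ⟩ := hPE ε hε s
  set h : L2 X := U γ g with hhdef
  have hperm : ∀ x : X, h x = g ((MulAction.toPerm γ⁻¹) x) := by
    intro x
    rw [hhdef, hU]
    simp [MulAction.toPerm_apply]
  have hnormh : ‖h‖ = ‖g‖ := norm_perm (MulAction.toPerm γ⁻¹) h g hperm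
  have hcomm : A h = U γ (A g) := by
    have hHg : H (U γ g) = U γ (H g) := by
      have := ContinuousLinearMap.ext_iff.mp (hH γ) g
      simpa [ContinuousLinearMap.comp_apply] using this
    rw [hAdef]
    simp only [ContinuousLinearMap.sub_apply, ContinuousLinearMap.smul_apply,
      ContinuousLinearMap.one_apply]
    rw [map_sub, map_smul, hHg, hhdef]
  have hAh : ‖A h‖ < ε * ‖h‖ := by
    have hn : ‖U γ (A g)‖ = ‖A g‖ := by
      refine norm_perm (MulAction.toPerm γ⁻¹) _ _ (fun x => ?_)
      rw [hU]
      simp [MulAction.toPerm_apply]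
    rw [hcomm, hn, hnormh]
    exact hAg
  have hw : ∀ x, ‖(m • h - MV h) x‖ ≤ ε * ‖h x‖ := by
    intro x
    have hx : (m • h - MV h) x = (m - V x) * h x := by
      rw [lp.coeFn_sub, Pi.sub_apply, lp.coeFn_smul, Pi.smul_apply, hMV, smul_eq_mul, sub_mul]
    rw [hx, norm_mul]
    by_cases h0 : h x = 0
    · simp [h0]
    · have hmem : γ⁻¹ • x ∈ s := by
        by_contra hx'
        exact h0 (by rw [hhdef, hU]; exact hg0 _ hx')
      have hV1 := hγ _ hmem
      rw [smul_inv_smul] at hV1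
      exact mul_le_mul_of_nonneg_right hV1.le (norm_nonneg _)
  have hwn : ‖m • h - MV h‖ ≤ ε * ‖h‖ := by
    have hmono := norm_mono (m • h - MV h) ((ε : ℂ) • h) (fun x => by
      rw [lp.coeFn_smul, Pi.smul_apply]
      calc ‖(m • h - MV h) x‖ ≤ ε * ‖h x‖ := hw x
        _ = ‖(ε : ℂ) • h x‖ := by
            rw [norm_smul, Complex.norm_real, Real.norm_eq_abs, abs_of_nonneg hε.le])
    calc ‖m • h - MV h‖ ≤ ‖(ε : ℂ) • h‖ := hmono
      _ = ε * ‖h‖ := by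
          rw [norm_smul, Complex.norm_real, Real.norm_eq_abs, abs_of_nonneg hε.le]
  have hdec : ((lam + m) • (1 : L2 X →L[ℂ] L2 X) - (H + MV)) h = A h + (m • h - MV h) := by
    rw [hAdef]
    simp only [ContinuousLinearMap.sub_apply, ContinuousLinearMap.add_apply,
      ContinuousLinearMap.smul_apply, ContinuousLinearMap.one_apply, add_smul]
    abel
  refine ⟨h, ?_⟩
  rw [hdec]
  have hhpos : 0 < ‖h‖ := by rw [hnormh]; exact hgpos
  calc ‖A h + (m • h - MV h)‖ ≤ ‖A h‖ + ‖m • h - MV h‖ := norm_add_le _ _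
    _ < ε * ‖h‖ + ε * ‖h‖ := add_lt_add_of_lt_of_le hAh hwn
    _ = c * ‖h‖ := by rw [hεdef]; ring

end PEAux

theorem specH0_add_M_subset_spec
    {X Γ : Type*} [Countable X] [Group Γ] [MulAction Γ X]
    (M : Set ℂ) (hMcl : IsClosed M) (hMbd : Bornology.IsBounded M)
    (U : Γ → (L2 X →L[ℂ] L2 X))
    (hU : ∀ γ (f : L2 X) (x : X), (U γ f) x = f (γ⁻¹ • x))
    (H₀ : L2 X →L[ℂ] L2 X) (hH₀ : ∀ γ : Γ, H₀ ∘L U γ = U γ ∘L H₀)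
    (V : X → ℂ) (hV : IsPseudoErgodic Γ M V)
    (MV : L2 X →L[ℂ] L2 X)
    (hMV : ∀ (f : L2 X) (x : X), (MV f) x = V x * f x) :
    ∀ lam ∈ spectrum ℂ H₀, ∀ m ∈ M, lam + m ∈ spectrum ℂ (H₀ + MV) := by
  haveI := Classical.decEq X
  intro lam hlam m hm
  rw [spectrum.mem_iff] at hlam ⊢
  rw [Algebra.algebraMap_eq_smul_one] at hlam ⊢
  intro hUnit
  apply hlam
  -- pseudo-ergodicity specialized to the constant potential `m`
  have hPE1 : ∀ ε > (0 : ℝ), ∀ F : Finset X, ∃ γ : Γ, ∀ x ∈ F, ‖m - V (γ • x)‖ < ε := by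
    intro ε hε F
    obtain ⟨γ, hγ⟩ := hV.2 ε hε F (fun _ => m) (fun x _ => hm)
    exact ⟨γ, fun x hx => by exact hγ x hx⟩
  have hPE2 : ∀ ε > (0 : ℝ), ∀ F : Finset X, ∃ γ : Γ,
      ∀ x ∈ F, ‖conj m - conj (V (γ • x))‖ < ε := by
    intro ε hε F
    obtain ⟨γ, hγ⟩ := hPE1 ε hε F
    exact ⟨γ, fun x hx => by rw [← map_sub, RCLike.norm_conj]; exact hγ x hx⟩
  -- adjoints
  have hUadj : ∀ γ : Γ, ContinuousLinearMap.adjoint (U γ) = U γ⁻¹ := by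
    intro γ
    symm
    rw [ContinuousLinearMap.eq_adjoint_iff]
    intro f g
    rw [lp.inner_eq_tsum, lp.inner_eq_tsum]
    calc ∑' x, ⟪(U γ⁻¹ f) x, g x⟫
        = ∑' x, (fun j => ⟪f j, g (γ⁻¹ • j)⟫) ((MulAction.toPerm γ) x) := by
          congr 1; funext x
          rw [hU]
          simp [MulAction.toPerm_apply, inv_inv, inv_smul_smul]
      _ = ∑' x, ⟪f x, g (γ⁻¹ • x)⟫ :=
          Equiv.tsum_eq (MulAction.toPerm γ) (fun j => ⟪f j, g (γ⁻¹ • j)⟫)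
      _ = ∑' x, ⟪f x, (U γ g) x⟫ := by
          congr 1; funext x; rw [hU]
  have hH₀adj : ∀ γ : Γ,
      (ContinuousLinearMap.adjoint H₀) ∘L U γ = U γ ∘L (ContinuousLinearMap.adjoint H₀) := by
    intro γ
    have hc := congrArg ContinuousLinearMap.adjoint (hH₀ γ⁻¹)
    rw [ContinuousLinearMap.adjoint_comp, ContinuousLinearMap.adjoint_comp, hUadj, inv_inv]
      at hc
    exact hc.symm
  have hMVadj : ∀ (f : L2 X) (x : X),
      (ContinuousLinearMap.adjoint MV f) x = conj (V x) * f x := by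
    intro f x
    have h1 : (ContinuousLinearMap.adjoint MV f) x
        = ⟪lp.single 2 x (1 : ℂ), ContinuousLinearMap.adjoint MV f⟫ :=
      (PEAux.coord _ x).symm
    rw [h1, ContinuousLinearMap.adjoint_inner_right, lp.inner_eq_tsum]
    rw [tsum_eq_single x (fun j hj => by
      rw [hMV, lp.single_apply_ne 2 x _ hj, mul_zero, inner_zero_left])]
    rw [hMV, lp.single_apply_self, mul_one, RCLike.inner_apply]
    ring
  -- claim 1: `lam • 1 - H₀` is bounded below
  have claim1 : ∃ c > (0 : ℝ), ∀ f : L2 X,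
      c * ‖f‖ ≤ ‖(lam • (1 : L2 X →L[ℂ] L2 X) - H₀) f‖ := by
    by_contra hcon
    push_neg at hcon
    have hcon' : ∀ c > (0 : ℝ), ∃ f : L2 X,
        ‖(lam • (1 : L2 X →L[ℂ] L2 X) - H₀) f‖ < c * ‖f‖ := by
      intro c hcpos
      obtain ⟨f, hf⟩ := hcon c hcpos
      exact ⟨f, hf⟩
    exact PEAux.not_isUnit_of_approx _
      (PEAux.core U hU H₀ hH₀ V MV hMV lam m hPE1 hcon') hUnit
  -- claim 2: the adjoint of `lam • 1 - H₀` is bounded below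
  have hadjA : ContinuousLinearMap.adjoint (lam • (1 : L2 X →L[ℂ] L2 X) - H₀)
      = conj lam • (1 : L2 X →L[ℂ] L2 X) - ContinuousLinearMap.adjoint H₀ := by
    rw [← ContinuousLinearMap.star_eq_adjoint, ← ContinuousLinearMap.star_eq_adjoint,
      star_sub, star_smul, star_one]
    rfl
  have claim2 : ∃ c > (0 : ℝ), ∀ f : L2 X,
      c * ‖f‖ ≤ ‖(ContinuousLinearMap.adjoint (lam • (1 : L2 X →L[ℂ] L2 X) - H₀)) f‖ := by
    by_contra hcon
    push_neg at hcon
    rw [hadjA] at hcon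
    have hcon' : ∀ c > (0 : ℝ), ∃ f : L2 X,
        ‖((conj lam) • (1 : L2 X →L[ℂ] L2 X) - ContinuousLinearMap.adjoint H₀) f‖
          < c * ‖f‖ := by
      intro c hcpos
      obtain ⟨f, hf⟩ := hcon c hcpos
      exact ⟨f, hf⟩
    have hcore := PEAux.core U hU (ContinuousLinearMap.adjoint H₀) hH₀adj
      (fun x => conj (V x)) (ContinuousLinearMap.adjoint MV) hMVadj
      (conj lam) (conj m) hPE2 hcon'
    have hstar : (conj lam + conj m) • (1 : L2 X →L[ℂ] L2 X)
        - (ContinuousLinearMap.adjoint H₀ + ContinuousLinearMap.adjoint MV)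
        = star ((lam + m) • (1 : L2 X →L[ℂ] L2 X) - (H₀ + MV)) := by
      rw [star_sub, star_add, star_smul, star_one, ContinuousLinearMap.star_eq_adjoint,
        ContinuousLinearMap.star_eq_adjoint]
      congr 1
      · congr 1
        exact (map_add (starRingEnd ℂ) lam m).symm
    exact PEAux.not_isUnit_of_approx _ (hstar ▸ hcore) hUnit.star
  obtain ⟨c₁, hc₁, hbb₁⟩ := claim1
  obtain ⟨c₂, hc₂, hbb₂⟩ := claim2
  exact PEAux.isUnit_of_bddBelow _ hc₁ hc₂ hbb₁ hbb₂
end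
end

section
/- Let A be a bounded operator on a Hilbert space ℋ. Suppose that for every ε > 0 and every natural number N there exists an orthonormal set f₁,…,f_N in ℋ with ‖Af_n − z f_n‖ < ε for 1 ≤ n ≤ N. Then A − zI is not a Fredholm operator, i.e. z lies in the essential spectrum of A. -/
noncomputable section

/-- A bounded operator is Fredholm if it has finite-dimensional kernel and cokernel
and closed range. -/
def IsFredholm {H : Type*} [NormedAddCommGroup H] [NormedSpace ℂ H]
    (T : H →L[ℂ] H) : Prop :=
  FiniteDimensional ℂ (LinearMap.ker (T : H →ₗ[ℂ] H)) ∧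
  IsClosed (LinearMap.range (T : H →ₗ[ℂ] H) : Set H) ∧
  FiniteDimensional ℂ (H ⧸ LinearMap.range (T : H →ₗ[ℂ] H))

theorem not_fredholm_of_orthonormal_approx_eigenvectors
    {H : Type*} [NormedAddCommGroup H] [InnerProductSpace ℂ H] [CompleteSpace H]
    (A : H →L[ℂ] H) (z : ℂ)
    (h : ∀ ε > (0 : ℝ), ∀ N : ℕ, ∃ f : Fin N → H,
      Orthonormal ℂ f ∧ ∀ n : Fin N, ‖A (f n) - z • f n‖ < ε) :
    ¬ IsFredholm (A - z • (1 : H →L[ℂ] H)) := by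
  set T : H →L[ℂ] H := A - z • (1 : H →L[ℂ] H) with hT
  have hTapp : ∀ x : H, T x = A x - z • x := by
    intro x; simp [hT]
  rintro ⟨hker, hclosed, -⟩
  set K : Submodule ℂ H := LinearMap.ker (T : H →ₗ[ℂ] H) with hK
  haveI : FiniteDimensional ℂ K := hker
  haveI : CompleteSpace K := FiniteDimensional.complete ℂ K
  haveI : CompleteSpace Kᗮ := (Submodule.isClosed_orthogonal K).completeSpace_coe
  haveI : CompleteSpace (LinearMap.range (T : H →ₗ[ℂ] H)) := hclosed.completeSpace_coe
  -- restricted operator Kᗮ → range T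
  set T' : Kᗮ →L[ℂ] H := T.comp Kᗮ.subtypeL with hT'
  have hmem : ∀ x : Kᗮ, T' x ∈ LinearMap.range (T : H →ₗ[ℂ] H) := fun x => ⟨x, rfl⟩
  set Tr : Kᗮ →L[ℂ] LinearMap.range (T : H →ₗ[ℂ] H) := T'.codRestrict _ hmem with hTr
  have hinj : LinearMap.ker (Tr : Kᗮ →ₗ[ℂ] LinearMap.range (T : H →ₗ[ℂ] H)) = ⊥ := by
    rw [eq_bot_iff]
    rintro ⟨x, hx⟩ hx0
    have hxK : x ∈ K := by
      have : T x = 0 := by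
        have := congrArg (Subtype.val) (hx0 : Tr ⟨x, hx⟩ = 0)
        simpa [hTr, hT'] using this
      exact this
    have : x = 0 := by
      have := Submodule.mem_inf.mpr ⟨hxK, hx⟩
      rwa [Submodule.inf_orthogonal_eq_bot, Submodule.mem_bot] at this
    simp [this]
  have hsurj : LinearMap.range (Tr : Kᗮ →ₗ[ℂ] LinearMap.range (T : H →ₗ[ℂ] H)) = ⊤ := by
    rw [eq_top_iff]
    rintro ⟨y, v, hv⟩ -
    refine ⟨⟨v - (K.orthogonalProjectionOnto v : H), Submodule.sub_starProjection_mem_orthogonal v⟩, ?_⟩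
    apply Subtype.ext
    have hPk : T ((K.orthogonalProjectionOnto v : H)) = 0 := (K.orthogonalProjectionOnto v).2
    show T (v - (K.orthogonalProjectionOnto v : H)) = y
    rw [map_sub, hPk, sub_zero]; exact hv
  set e := ContinuousLinearEquiv.ofBijective Tr hinj hsurj with he
  set c : ℝ := ‖(e.symm : LinearMap.range (T : H →ₗ[ℂ] H) →L[ℂ] Kᗮ)‖ with hc
  have hc0 : 0 ≤ c := norm_nonneg _
  -- bounded below on Kᗮ
  have hbdd : ∀ x : Kᗮ, ‖(x : H)‖ ≤ c * ‖T (x : H)‖ := by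
    intro x
    have h1 : e.symm (e x) = x := e.symm_apply_apply x
    have h2 : ‖e.symm (e x)‖ ≤ c * ‖e x‖ :=
      (e.symm : LinearMap.range (T : H →ₗ[ℂ] H) →L[ℂ] Kᗮ).le_opNorm (e x)
    rw [h1] at h2
    have h3 : ‖e x‖ = ‖T (x : H)‖ := by
      have : ((e x : LinearMap.range (T : H →ₗ[ℂ] H)) : H) = T (x : H) := rfl
      rw [← this]; rfl
    rw [h3] at h2
    exact h2
  -- choose parameters
  set N : ℕ := Module.finrank ℂ K + 1 with hN
  set ε : ℝ := (c * N + 1)⁻¹ with hε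
  have hcN : 0 ≤ c * N := mul_nonneg hc0 (Nat.cast_nonneg N)
  have hε0 : 0 < ε := by positivity
  obtain ⟨f, hf_on, hf_small⟩ := h ε hε0 N
  -- linear dependence of projections
  set g : Fin N → K := fun n => K.orthogonalProjectionOnto (f n) with hg
  have hdep : ¬ LinearIndependent ℂ g := by
    intro hli
    have := hli.fintype_card_le_finrank
    simp [hN] at this
  obtain ⟨a, ha_sum, i₀, ha_i₀⟩ := Fintype.not_linearIndependent_iff.mp hdep
  set x : H := ∑ n, a n • f n with hx
  have hPx : K.orthogonalProjectionOnto x = 0 := by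
    rw [hx, map_sum]
    simpa [hg] using ha_sum
  have hx_mem : x ∈ Kᗮ := by
    have : x - (K.orthogonalProjectionOnto x : H) ∈ Kᗮ := Submodule.sub_starProjection_mem_orthogonal (K := K) x
    rwa [hPx, ZeroMemClass.coe_zero, sub_zero] at this
  -- pick max coefficient
  obtain ⟨n₀, -, hn₀⟩ := Finset.exists_max_image Finset.univ (fun n => ‖a n‖)
    ⟨i₀, Finset.mem_univ i₀⟩
  set M : ℝ := ‖a n₀‖ with hM
  have hM0 : 0 < M := lt_of_lt_of_le (norm_pos_iff.mpr ha_i₀) (hn₀ i₀ (Finset.mem_univ i₀))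
  -- M ≤ ‖x‖
  have hMx : M ≤ ‖x‖ := by
    have h1 : inner ℂ (f n₀) x = a n₀ := hf_on.inner_right_fintype a n₀
    have h2 : ‖(inner ℂ (f n₀) x : ℂ)‖ ≤ ‖f n₀‖ * ‖x‖ := norm_inner_le_norm _ _
    rw [h1, hf_on.1 n₀, one_mul] at h2
    exact h2
  -- ‖T x‖ ≤ N * M * ε
  have hTx : ‖T x‖ ≤ N * (M * ε) := by
    have h1 : T x = ∑ n, a n • T (f n) := by
      rw [hx, map_sum]; simp
    rw [h1]
    calc ‖∑ n, a n • T (f n)‖ ≤ ∑ n, ‖a n • T (f n)‖ := norm_sum_le _ _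
      _ ≤ ∑ _n : Fin N, M * ε := by
          apply Finset.sum_le_sum
          intro n _
          rw [norm_smul]
          have h2 : ‖T (f n)‖ ≤ ε := by
            have := hf_small n
            rw [hTapp]
            exact this.le
          exact mul_le_mul (hn₀ n (Finset.mem_univ n)) h2 (norm_nonneg _) hM0.le
      _ = N * (M * ε) := by simp [Finset.sum_const, mul_comm]
  -- contradiction
  have hchain : M ≤ c * (N * (M * ε)) :=
    le_trans hMx (le_trans (hbdd ⟨x, hx_mem⟩) (by
      exact mul_le_mul_of_nonneg_left hTx hc0))
  have hεlt : c * N * ε < 1 := by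
    rw [hε, mul_inv_lt_iff₀' (by positivity)]
    linarith
  have heq : c * (N * (M * ε)) = (c * N * ε) * M := by ring
  have h2 : (c * N * ε) * M < 1 * M := mul_lt_mul_of_pos_right hεlt hM0
  linarith
end
end

section
/- Let X be a countable set with a group Γ acting by permutations and suppose there exists a (Γ,𝓜) pseudo-ergodic potential V : X → 𝓜 where 𝓜 ⊆ ℂ contains at least two points. Then for every finite subset F ⊆ X and every natural number N there exist γ₁,…,γ_N ∈ Γ such that the sets γ₁F, …, γ_NF are pairwise disjoint. -/
open scoped Pointwise

noncomputable section

theorem exists_disjoint_translates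
    {X Γ : Type*} [Countable X] [Group Γ] [MulAction Γ X]
    (M : Set ℂ) (m₁ m₂ : ℂ) (hm₁ : m₁ ∈ M) (hm₂ : m₂ ∈ M) (hne : m₁ ≠ m₂)
    (V : X → ℂ) (hV : IsPseudoErgodic Γ M V) :
    ∀ (F : Finset X) (N : ℕ), ∃ γ : Fin N → Γ,
      Pairwise fun i j => Disjoint (γ i • (F : Set X)) (γ j • (F : Set X)) := by
  classical
  obtain ⟨hVM, hPE⟩ := hV
  intro F N
  induction N with
  | zero => exact ⟨fun i => 1, fun i => i.elim0⟩
  | succ n ih =>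
    obtain ⟨γ, hγ⟩ := ih
    set ε := ‖m₁ - m₂‖ / 2 with hεdef
    have hεpos : 0 < ε :=
      div_pos (norm_pos_iff.mpr (sub_ne_zero.mpr hne)) two_pos
    set U : Finset X := Finset.univ.biUnion
      (fun i : Fin n => F.image (fun x => γ i • x)) with hU
    obtain ⟨δ, hδ⟩ := hPE ε hεpos U (fun _ => m₁) (fun x _ => hm₁)
    obtain ⟨η, hη⟩ := hPE ε hεpos F (fun _ => m₂) (fun x _ => hm₂)
    have key : ∀ i : Fin n, Disjoint (η • (F : Set X)) ((δ * γ i) • (F : Set X)) := by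
      intro i
      rw [Set.disjoint_left]
      rintro y ⟨x, hx, rfl⟩ ⟨z, hz, hzy⟩
      have h1 : ‖m₂ - V (η • x)‖ < ε := hη x hx
      have h2 : ‖m₁ - V (δ • (γ i • z))‖ < ε := by
        apply hδ
        exact Finset.mem_biUnion.mpr
          ⟨i, Finset.mem_univ _, Finset.mem_image.mpr ⟨z, hz, rfl⟩⟩
      have heq : V (η • x) = V (δ • (γ i • z)) := by
        simp only at hzy
        rw [← hzy, mul_smul]
      have h3 : ‖m₁ - m₂‖ ≤
          ‖m₁ - V (η • x)‖ + ‖m₂ - V (η • x)‖ := by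
        calc ‖m₁ - m₂‖
            = ‖(m₁ - V (η • x)) - (m₂ - V (η • x))‖ := by ring_nf
          _ ≤ _ := norm_sub_le _ _
      rw [heq] at h1 h3
      have : ‖m₁ - m₂‖ < ε + ε := lt_of_le_of_lt h3 (by linarith)
      rw [hεdef] at this
      linarith
    refine ⟨Fin.snoc (fun i => δ * γ i) η, ?_⟩
    intro i j hij
    rcases Fin.eq_castSucc_or_eq_last i with ⟨i', rfl⟩ | rfl <;>
      rcases Fin.eq_castSucc_or_eq_last j with ⟨j', rfl⟩ | rfl
    · simp only [Fin.snoc_castSucc]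
      have hij' : i' ≠ j' := fun h => hij (by rw [h])
      rw [mul_smul, mul_smul, Set.disjoint_smul_set]
      exact hγ hij'
    · simp only [Fin.snoc_castSucc, Fin.snoc_last]
      exact (key i').symm
    · simp only [Fin.snoc_castSucc, Fin.snoc_last]
      exact key j'
    · exact absurd rfl hij
end
end

section
/- Let B be a 2×2 complex matrix with det B = e^{−2ng} where g > 0 and n ≥ 1. Then at least one eigenvalue of B has modulus strictly less than 1. Moreover the sets {tr B ∈ int(Eⁿ)}, {tr B ∈ Eⁿ}, {tr B ∈ ext(Eⁿ)} correspond exactly to: both eigenvalues have modulus < 1; some eigenvalue has modulus exactly 1; some eigenvalue has modulus > 1, where Eⁿ = {e^{iθ} + e^{−2ng−iθ} : θ ∈ [−π,π]}. -/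
noncomputable section

/-- The ellipse `Eⁿ = {e^{iθ} + r e^{-iθ} : θ ∈ [-π, π]}` with `r = e^{-2ng}`. -/
def ellipseE (r : ℝ) : Set ℂ :=
  {z : ℂ | ∃ θ ∈ Set.Icc (-Real.pi) Real.pi,
    z = Complex.exp (θ * Complex.I) + (r : ℂ) * Complex.exp (-θ * Complex.I)}

/-- The interior (bounded complementary component) of the ellipse `Eⁿ`,
described explicitly via its semi-axes `1 + r` and `1 - r`. -/
def ellipseInt (r : ℝ) : Set ℂ :=
  {z : ℂ | (z.re / (1 + r)) ^ 2 + (z.im / (1 - r)) ^ 2 < 1}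

/-- The exterior (unbounded complementary component) of the ellipse `Eⁿ`. -/
def ellipseExt (r : ℝ) : Set ℂ :=
  {z : ℂ | 1 < (z.re / (1 + r)) ^ 2 + (z.im / (1 - r)) ^ 2}

lemma spec_iff_quadratic (B : Matrix (Fin 2) (Fin 2) ℂ) (μ : ℂ) :
    μ ∈ spectrum ℂ B ↔ μ ^ 2 - B.trace * μ + B.det = 0 := by
  rw [spectrum.mem_iff, Matrix.isUnit_iff_isUnit_det, isUnit_iff_ne_zero, not_not,
    Matrix.det_fin_two, Matrix.trace_fin_two, Matrix.det_fin_two]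
  simp [Matrix.algebraMap_matrix_apply]
  constructor <;> intro h <;> [linear_combination h; linear_combination h]

lemma key_id (r x y P : ℝ) (hP0 : P ≠ 0) (h1 : 1 + r ≠ 0) (h2 : 1 - r ≠ 0)
    (hP : x ^ 2 + y ^ 2 = P) :
    (x * (P + r) / P / (1 + r)) ^ 2 + (y * (P - r) / P / (1 - r)) ^ 2 - 1 =
      (P - 1) * ((P - r ^ 2) * (x ^ 2 * (1 - r) ^ 2 + y ^ 2 * (1 + r) ^ 2) /
        (P ^ 2 * (1 + r) ^ 2 * (1 - r) ^ 2)) := by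
  subst hP
  field_simp
  ring

set_option maxHeartbeats 1000000 in
theorem transferMatrix_eigenvalue_trichotomy
    (g : ℝ) (hg : 0 < g) (n : ℕ) (hn : 0 < n)
    (B : Matrix (Fin 2) (Fin 2) ℂ)
    (hdet : B.det = Complex.exp (-2 * n * (g : ℂ))) :
    (∃ μ ∈ spectrum ℂ B, ‖μ‖ < 1) ∧
    (B.trace ∈ ellipseInt (Real.exp (-2 * n * g)) ↔
      ∀ μ ∈ spectrum ℂ B, ‖μ‖ < 1) ∧
    (B.trace ∈ ellipseE (Real.exp (-2 * n * g)) ↔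
      ∃ μ ∈ spectrum ℂ B, ‖μ‖ = 1) ∧
    (B.trace ∈ ellipseExt (Real.exp (-2 * n * g)) ↔
      ∃ μ ∈ spectrum ℂ B, 1 < ‖μ‖) := by
  set r : ℝ := Real.exp (-2 * n * g) with hrdef
  have hr0 : 0 < r := Real.exp_pos _
  have hr1 : r < 1 := by
    apply Real.exp_lt_one_iff.mpr
    have hn1 : (1 : ℝ) ≤ (n : ℝ) := by exact_mod_cast hn
    nlinarith
  have hdetr : B.det = (r : ℂ) := by
    rw [hdet, hrdef, Complex.ofReal_exp]
    push_cast
    ring_nf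
  -- factor the characteristic quadratic
  obtain ⟨s, hs⟩ := IsAlgClosed.exists_pow_nat_eq (k := ℂ) (B.trace ^ 2 - 4 * B.det)
    (n := 2) (by norm_num)
  obtain ⟨μ₁, μ₂, hsum, hprod, hge⟩ :
      ∃ μ₁ μ₂ : ℂ, μ₁ + μ₂ = B.trace ∧ μ₁ * μ₂ = B.det ∧
        ‖μ₂‖ ≤ ‖μ₁‖ := by
    rcases le_total (‖(B.trace - s) / 2‖) (‖(B.trace + s) / 2‖) with h | h
    · exact ⟨(B.trace + s) / 2, (B.trace - s) / 2, by ring, by linear_combination (-1/4 : ℂ) * hs, h⟩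
    · exact ⟨(B.trace - s) / 2, (B.trace + s) / 2, by ring, by linear_combination (-1/4 : ℂ) * hs, h⟩
  have hquad : ∀ μ : ℂ, μ ^ 2 - B.trace * μ + B.det = 0 ↔ (μ = μ₁ ∨ μ = μ₂) := by
    intro μ
    have hfac : μ ^ 2 - B.trace * μ + B.det = (μ - μ₁) * (μ - μ₂) := by
      linear_combination μ * hsum - hprod
    rw [hfac, mul_eq_zero, sub_eq_zero, sub_eq_zero]
  have hspec : ∀ μ : ℂ, μ ∈ spectrum ℂ B ↔ (μ = μ₁ ∨ μ = μ₂) := by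
    intro μ; rw [spec_iff_quadratic, hquad]
  have hμ₁spec : μ₁ ∈ spectrum ℂ B := (hspec μ₁).mpr (Or.inl rfl)
  have hμ₂spec : μ₂ ∈ spectrum ℂ B := (hspec μ₂).mpr (Or.inr rfl)
  have hprodr : μ₁ * μ₂ = (r : ℂ) := by rw [hprod, hdetr]
  have hμ₁0 : μ₁ ≠ 0 := by
    intro h
    rw [h, zero_mul] at hprodr
    have : r = 0 := by exact_mod_cast hprodr.symm
    linarith
  set A : ℝ := ‖μ₁‖ with hAdef
  set A₂ : ℝ := ‖μ₂‖ with hA2def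
  have hm : A * A₂ = r := by
    rw [hAdef, hA2def, ← norm_mul, hprodr, Complex.norm_real, Real.norm_eq_abs, abs_of_pos hr0]
  have hA0 : 0 < A := norm_pos_iff.mpr hμ₁0
  have hA20 : 0 ≤ A₂ := norm_nonneg μ₂
  set P : ℝ := Complex.normSq μ₁ with hPdef
  set x : ℝ := μ₁.re
  set y : ℝ := μ₁.im
  have hPxy : x ^ 2 + y ^ 2 = P := by rw [hPdef, Complex.normSq_apply]; ring
  have hP0 : 0 < P := Complex.normSq_pos.mpr hμ₁0
  have hAP : A ^ 2 = P := Complex.sq_norm μ₁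
  have hPr : r ≤ P := by nlinarith
  have hμ₂ : μ₂ = (r : ℂ) * μ₁⁻¹ := by
    field_simp
    linear_combination hprodr
  have htre : B.trace.re = x * (P + r) / P := by
    rw [← hsum, hμ₂]
    simp only [Complex.add_re, Complex.re_ofReal_mul, Complex.inv_re, ← hPdef]
    field_simp
    ring
  have htim : B.trace.im = y * (P - r) / P := by
    rw [← hsum, hμ₂]
    simp only [Complex.add_im, Complex.im_ofReal_mul, Complex.inv_im, ← hPdef]
    field_simp
    ring
  have h1r : (1 : ℝ) + r ≠ 0 := by linarith
  have h2r : (1 : ℝ) - r ≠ 0 := by linarith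
  obtain ⟨q, hq, hkey⟩ : ∃ q : ℝ, 0 < q ∧
      (B.trace.re / (1 + r)) ^ 2 + (B.trace.im / (1 - r)) ^ 2 - 1 = (P - 1) * q := by
    refine ⟨(P - r ^ 2) * (x ^ 2 * (1 - r) ^ 2 + y ^ 2 * (1 + r) ^ 2) /
        (P ^ 2 * (1 + r) ^ 2 * (1 - r) ^ 2), ?_, ?_⟩
    · apply div_pos
      · apply mul_pos (by nlinarith)
        have h3 : 0 < P * (1 - r) ^ 2 := mul_pos hP0 (pow_pos (by linarith) 2)
        nlinarith [mul_nonneg hr0.le (sq_nonneg y)]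
      · have h4 : (0:ℝ) < (1 - r) ^ 2 := pow_pos (by linarith) 2
        have h5 : (0:ℝ) < (1 + r) ^ 2 := pow_pos (by linarith) 2
        positivity
    · rw [htre, htim]
      exact key_id r x y P hP0.ne' h1r h2r hPxy
  have hInt : B.trace ∈ ellipseInt r ↔ A < 1 := by
    simp only [ellipseInt, Set.mem_setOf_eq]
    constructor
    · intro h
      have hP1 : P < 1 := by nlinarith
      nlinarith
    · intro h
      have hP1 : P < 1 := by nlinarith
      nlinarith
  have hExt : B.trace ∈ ellipseExt r ↔ 1 < A := by
    simp only [ellipseExt, Set.mem_setOf_eq]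
    constructor
    · intro h
      have hP1 : 1 < P := by nlinarith
      nlinarith
    · intro h
      have hP1 : 1 < P := by nlinarith
      nlinarith
  have hE1 : A = 1 → B.trace ∈ ellipseE r := by
    intro hA1
    refine ⟨Complex.arg μ₁, ⟨(Complex.neg_pi_lt_arg μ₁).le, Complex.arg_le_pi μ₁⟩, ?_⟩
    have hexp : Complex.exp (Complex.arg μ₁ * Complex.I) = μ₁ := by
      have h := Complex.norm_mul_exp_arg_mul_I μ₁
      rw [← hAdef, hA1] at h
      simpa using h
    have hexpneg : Complex.exp (-(Complex.arg μ₁ : ℂ) * Complex.I) = μ₁⁻¹ := by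
      rw [neg_mul, Complex.exp_neg, hexp]
    rw [← hsum, hμ₂, hexp, hexpneg]
  have hE2 : B.trace ∈ ellipseE r → A = 1 := by
    rintro ⟨θ, _, ht⟩
    set w : ℂ := Complex.exp (θ * Complex.I) with hwdef
    have hwabs : ‖w‖ = 1 := Complex.norm_exp_ofReal_mul_I θ
    have hprod1 : Complex.exp (-(θ : ℂ) * Complex.I) * w = 1 := by
      rw [hwdef, ← Complex.exp_add]
      simp
    have hwroot : w ^ 2 - B.trace * w + B.det = 0 := by
      rw [ht, hdetr]
      linear_combination (-(r : ℂ)) * hprod1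
    rcases (hquad w).mp hwroot with h | h
    · rw [hAdef, ← h, hwabs]
    · exfalso
      have hA21 : A₂ = 1 := by rw [hA2def, ← h]; exact hwabs
      nlinarith
  have hA2lt : A₂ < 1 := by nlinarith
  refine ⟨⟨μ₂, hμ₂spec, hA2lt⟩, ?_, ?_, ?_⟩
  · rw [hInt]
    constructor
    · intro hA1 μ hμ
      rcases (hspec μ).mp hμ with h | h <;> rw [h]
      · exact hA1
      · exact hA2lt
    · intro h
      exact h μ₁ hμ₁spec
  · constructor
    · intro h
      exact ⟨μ₁, hμ₁spec, hE2 h⟩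
    · rintro ⟨μ, hμ, habs1⟩
      rcases (hspec μ).mp hμ with h | h
      · exact hE1 (by rw [hAdef, ← h]; exact habs1)
      · exfalso
        have hA21 : A₂ = 1 := by rw [hA2def, ← h]; exact habs1
        nlinarith
  · rw [hExt]
    constructor
    · intro h
      exact ⟨μ₁, hμ₁spec, h⟩
    · rintro ⟨μ, hμ, habs1⟩
      rcases (hspec μ).mp hμ with h | h
      · rwa [h, ← hAdef] at habs1
      · have hA21 : 1 < A₂ := by rw [hA2def, ← h]; exact habs1
        nlinarith
end
end
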